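/- Consider a quitting game with nonempty set of normal players I_* = {1,…,n}. If the linear complementarity problem LCP((r̂^i)_{i=1}^n, 0) has a solution (w,z) with z_0 < 1, then for every ε > 0 the game admits a stationary ε-equilibrium. -/

import Mathlib

noncomputable section

/-- The probability that, under the behavior strategy profile `x`, the game terminates at
stage `t` (0-indexed) with quitting set `S`. -/
def termProb {N : ℕ} (x : Fin N → ℕ → ℝ) (t : ℕ) (S : Finset (Fin N)) : ℝ :=
  (∏ u ∈ Finset.range t, ∏ i : Fin N, (1 - x i u)) *
    ((∏ i ∈ S, x i t) * ∏ i ∈ Sᶜ, (1 - x i t))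

/-- The collection of nonempty subsets of players. -/
def nonempties (N : ℕ) : Finset (Finset (Fin N)) :=
  Finset.univ.filter fun S => S ≠ ∅

/-- The expected payoff of player `i` under the behavior strategy profile `x` in the
quitting game with payoffs `r`. -/
def payoff {N : ℕ} (r : Finset (Fin N) → Fin N → ℝ) (x : Fin N → ℕ → ℝ) (i : Fin N) : ℝ :=
  (∑' t : ℕ, ∑ S ∈ nonempties N, termProb x t S * r S i) +
    (1 - ∑' t : ℕ, ∑ S ∈ nonempties N, termProb x t S) * r ∅ i

/-- `x` is an `ε`-equilibrium: it is a valid profile and no player can gain more than `ε`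
by a unilateral deviation to any valid behavior strategy. -/
def IsEpsEquilibrium {N : ℕ} (r : Finset (Fin N) → Fin N → ℝ)
    (x : Fin N → ℕ → ℝ) (ε : ℝ) : Prop :=
  (∀ i t, x i t ∈ Set.Icc (0 : ℝ) 1) ∧
    ∀ (i : Fin N) (x' : ℕ → ℝ), (∀ t, x' t ∈ Set.Icc (0 : ℝ) 1) →
      payoff r x i ≥ payoff r (Function.update x i x') i - ε

/-- The decreasing sequence of sets of players `I_0 ⊇ I_1 ⊇ ⋯`:
`I_0 = I` and `I_{l+1} = {i ∈ I_l : ∃ j ∈ I_l, j ≠ i, r^j_i ≤ 0}`. -/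
def normalLevel {N : ℕ} (r : Finset (Fin N) → Fin N → ℝ) : ℕ → Set (Fin N)
  | 0 => Set.univ
  | l + 1 => {i | i ∈ normalLevel r l ∧ ∃ j ∈ normalLevel r l, j ≠ i ∧ r {j} i ≤ 0}

/-- The set `I_* = ∩_l I_l` of normal players. -/
def normalPlayers {N : ℕ} (r : Finset (Fin N) → Fin N → ℝ) : Set (Fin N) :=
  ⋂ l, normalLevel r l

/-- A solution `(w,z)` of the linear complementarity problem `LCP((r^i)_{i=1}^n, q)`,
where `r i` is the vector `r^i`: `w ∈ ℝ^n_{≥0}`, `z ∈ Δ({0,1,…,n})`,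
`w = z_0 q + ∑_i z_i r^i`, and `z_i = 0` or `w_i = 0` for every `i ∈ [n]`. -/
def IsLCPSolution (n : ℕ) (r : Fin n → Fin n → ℝ) (q w : Fin n → ℝ)
    (z : Fin (n + 1) → ℝ) : Prop :=
  (∀ i, 0 ≤ w i) ∧ (∀ i, 0 ≤ z i) ∧ (∑ i, z i = 1) ∧
    (∀ j, w j = z 0 * q j + ∑ i : Fin n, z i.succ * r i j) ∧
    (∀ i : Fin n, z i.succ = 0 ∨ w i = 0)

/-- The matrix with columns `r^1,…,r^n` is a `Q`-matrix if `LCP((r^i), q)` has a solution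
for every `q ∈ ℝ^n`. -/
def IsQMatrix (n : ℕ) (r : Fin n → Fin n → ℝ) : Prop :=
  ∀ q : Fin n → ℝ, ∃ (w : Fin n → ℝ) (z : Fin (n + 1) → ℝ), IsLCPSolution n r q w z

/-!
Dividing `(z_1, …, z_n)` by `1 - z_0` gives a distribution `ξ` on the normal players with
`W_i := ∑ₖ ξ_k r^k_i ≥ 0` for every player `i`, and `W_i = 0` wherever `ξ_i > 0`: for normal `i`
this is the LCP itself, and for the others every `r^k_i` with `k` normal is positive.

Against a stationary profile `y`, a deviation of player `i` is worth no more than the better of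
quitting at once and never quitting. Let `d_i = 1 - ∏_{k ≠ i} (1 - y_k)` be the probability that
somebody else quits in a stage. Since `r^i_i = 0`, quitting at once is worth `O(d_i)`, while never
quitting is worth `C_i / d_i` with `C_i = ∑ₖ y_k r^k_i + O((∑_{k ≠ i} y_k)²)`.

If two players are in the support of `ξ`, then `y = δ ξ` for small `δ` gives `C_i / d_i ≈ W_i ≥ 0`
and `≈ 0` for every player who quits. If only `j` is, then `r^j = W ≥ 0`. Let `j` quit with
probability `β = ε/24` and a normal player `k` with `r^k_j ≤ 0` (one exists because `j` is normal)
with the much smaller probability `εβ/2`. Then never quitting is worth about `r^k_j ≤ 0` to `j` and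
about `r^j_i ≥ 0` to every other player `i`, and `k` quits so rarely compared with `j` that doing
so costs it only `O(ε)`.
-/

open Finset Function

theorem Finset.one_sub_sum_le_prod_one_sub {ι : Type*} [LinearOrder ι] (s : Finset ι)
    {f : ι → ℝ} (h0 : ∀ i ∈ s, 0 ≤ f i) (h1 : ∀ i ∈ s, f i ≤ 1) :
    1 - ∑ i ∈ s, f i ≤ ∏ i ∈ s, (1 - f i) := by
  rw [prod_one_sub_ordered, sub_le_sub_iff_left]
  refine sum_le_sum fun i hi => mul_le_of_le_one_right (h0 i hi) ?_
  exact prod_le_one (fun j hj => by linarith [h1 j (filter_subset _ _ hj)])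
    fun j hj => by linarith [h0 j (filter_subset _ _ hj)]

theorem IsEpsEquilibrium.mono {N : ℕ} {r : Finset (Fin N) → Fin N → ℝ} {x : Fin N → ℕ → ℝ}
    {ε ε' : ℝ} (h : IsEpsEquilibrium r x ε) (hε : ε ≤ ε') : IsEpsEquilibrium r x ε' :=
  ⟨h.1, fun i x' hx' => (h.2 i x' hx').trans' (by linarith)⟩

namespace QuittingGame

variable {N : ℕ}

def stageProb (a : Fin N → ℝ) (S : Finset (Fin N)) : ℝ :=
  (∏ k ∈ S, a k) * ∏ k ∈ Sᶜ, (1 - a k)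

def stagePayoff (r : Finset (Fin N) → Fin N → ℝ) (a : Fin N → ℝ) (i : Fin N) : ℝ :=
  ∑ S ∈ nonempties N, stageProb a S * r S i

def othersContinue (y : Fin N → ℝ) (i : Fin N) : ℝ :=
  ∏ k ∈ univ.erase i, (1 - y k)

def quitPayoff (r : Finset (Fin N) → Fin N → ℝ) (y : Fin N → ℝ) (i : Fin N) : ℝ :=
  stagePayoff r (update y i 1) i

def waitPayoff (r : Finset (Fin N) → Fin N → ℝ) (y : Fin N → ℝ) (i : Fin N) : ℝ :=
  stagePayoff r (update y i 0) i

variable {r : Finset (Fin N) → Fin N → ℝ}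

section stage

variable {a : Fin N → ℝ}

theorem stageProb_nonneg (ha : ∀ k, a k ∈ Set.Icc 0 1) (S : Finset (Fin N)) :
    0 ≤ stageProb a S :=
  mul_nonneg (prod_nonneg fun k _ => (ha k).1) (prod_nonneg fun k _ => sub_nonneg.2 (ha k).2)

theorem sum_stageProb (a : Fin N → ℝ) : ∑ S, stageProb a S = 1 := by
  have h := prod_add a (fun k => 1 - a k) univ
  simp only [add_sub_cancel, prod_const_one, powerset_univ, ← compl_eq_univ_sdiff] at h
  exact h.symm

theorem stageProb_empty (a : Fin N → ℝ) : stageProb a ∅ = ∏ k, (1 - a k) := by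
  simp [stageProb]

theorem stageProb_singleton (a : Fin N → ℝ) (k : Fin N) :
    stageProb a {k} = a k * othersContinue a k := by
  rw [stageProb, prod_singleton, compl_singleton, othersContinue]

theorem sum_stageProb_nonempties (a : Fin N → ℝ) :
    ∑ S ∈ nonempties N, stageProb a S = 1 - ∏ k, (1 - a k) := by
  rw [← stageProb_empty, ← sum_stageProb a, nonempties,
    ← sum_filter_add_sum_filter_not univ (fun S : Finset (Fin N) => S ≠ ∅)]
  simp [filter_eq']

theorem stageProb_update (a : Fin N → ℝ) (i : Fin N) (c : ℝ) (S : Finset (Fin N)) :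
    stageProb (update a i c) S =
      c * stageProb (update a i 1) S + (1 - c) * stageProb (update a i 0) S := by
  have hcompl (b : ℝ) : ∏ k ∈ Sᶜ, (1 - update a i b k) =
      ∏ k ∈ Sᶜ, update (fun k => 1 - a k) i (1 - b) k :=
    prod_congr rfl fun k _ => apply_update (fun (_ : Fin N) (x : ℝ) => 1 - x) a i b k
  simp only [stageProb, hcompl]
  by_cases hi : i ∈ S
  · simp only [prod_update_of_mem hi, prod_update_of_notMem (notMem_compl.2 hi)]
    ring
  · simp only [prod_update_of_mem (mem_compl.2 hi), prod_update_of_notMem hi]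
    ring

theorem stagePayoff_update (a : Fin N → ℝ) (i : Fin N) (c : ℝ) :
    stagePayoff r (update a i c) i =
      c * stagePayoff r (update a i 1) i + (1 - c) * stagePayoff r (update a i 0) i := by
  simp only [stagePayoff, mul_sum, ← sum_add_distrib]
  exact sum_congr rfl fun S _ => by rw [stageProb_update a i c S]; ring

theorem othersContinue_nonneg (ha : ∀ k, a k ∈ Set.Icc 0 1) (i : Fin N) :
    0 ≤ othersContinue a i :=
  prod_nonneg fun k _ => sub_nonneg.2 (ha k).2

theorem one_sub_othersContinue_le_sum (ha : ∀ k, a k ∈ Set.Icc 0 1) (i : Fin N) :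
    1 - othersContinue a i ≤ ∑ k ∈ univ.erase i, a k := by
  rw [othersContinue]
  linarith [(univ.erase i).one_sub_sum_le_prod_one_sub (fun k _ => (ha k).1) fun k _ => (ha k).2]

theorem othersContinue_mem_Icc (ha : ∀ k, a k ∈ Set.Icc 0 1) (i : Fin N) :
    othersContinue a i ∈ Set.Icc (1 - ∑ k, a k) 1 := by
  refine ⟨?_, prod_le_one (fun k _ => sub_nonneg.2 (ha k).2) fun k _ => by linarith [(ha k).1]⟩
  have := sum_le_sum_of_subset_of_nonneg (erase_subset i univ) fun k _ _ => (ha k).1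
  linarith [one_sub_othersContinue_le_sum ha i]

theorem abs_stagePayoff_le (hr : ∀ S j, |r S j| ≤ 1) (ha : ∀ k, a k ∈ Set.Icc 0 1)
    {i : Fin N} {S₀ : Finset (Fin N)} (hS₀ : S₀ ∈ nonempties N) (h0 : r S₀ i = 0) :
    |stagePayoff r a i| ≤ 1 - ∏ k, (1 - a k) - stageProb a S₀ := by
  rw [stagePayoff, ← sum_erase_add _ _ hS₀, h0, mul_zero, add_zero,
    ← sum_stageProb_nonempties, ← sum_erase_eq_sub hS₀]
  refine (abs_sum_le_sum_abs _ _).trans (sum_le_sum fun S _ => ?_)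
  rw [abs_mul, abs_of_nonneg (stageProb_nonneg ha S)]
  exact mul_le_of_le_one_right (stageProb_nonneg ha S) (hr S i)

theorem sum_nonempties_filter_card_eq_one (f : Finset (Fin N) → ℝ) :
    ∑ S ∈ nonempties N with S.card = 1, f S = ∑ k, f {k} := by
  have h : {S ∈ nonempties N | S.card = 1} = univ.map ⟨singleton, singleton_injective⟩ := by
    ext S
    simp only [nonempties, mem_filter, mem_univ, true_and, mem_map, card_eq_one]
    constructor
    · rintro ⟨-, k, rfl⟩
      exact ⟨k, rfl⟩
    · rintro ⟨k, rfl⟩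
      exact ⟨singleton_ne_empty k, k, rfl⟩
  rw [h, sum_map]
  rfl

theorem abs_stageProb_singleton_sub_le (ha : ∀ k, a k ∈ Set.Icc 0 1) (k : Fin N) :
    |stageProb a {k} - a k| ≤ a k * ∑ l, a l := by
  obtain ⟨h0, h1⟩ := othersContinue_mem_Icc ha k
  rw [stageProb_singleton, abs_le]
  constructor <;> nlinarith [(ha k).1]

theorem sum_stageProb_card_ne_one_le (ha : ∀ k, a k ∈ Set.Icc 0 1) :
    ∑ S ∈ nonempties N with S.card ≠ 1, stageProb a S ≤ (∑ k, a k) ^ 2 := by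
  have hsplit := sum_filter_add_sum_filter_not (nonempties N) (fun S => S.card = 1) (stageProb a)
  rw [sum_nonempties_filter_card_eq_one, sum_stageProb_nonempties] at hsplit
  have hsingle : (∑ k, a k) * (1 - ∑ k, a k) ≤ ∑ k, stageProb a {k} := by
    rw [sum_mul]
    refine sum_le_sum fun k _ => ?_
    rw [stageProb_singleton]
    exact mul_le_mul_of_nonneg_left (othersContinue_mem_Icc ha k).1 (ha k).1
  have hnone := univ.one_sub_sum_le_prod_one_sub (fun k _ => (ha k).1) fun k _ => (ha k).2
  nlinarith

theorem abs_stagePayoff_sub_le (hr : ∀ S j, |r S j| ≤ 1) (ha : ∀ k, a k ∈ Set.Icc 0 1)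
    (i : Fin N) : |stagePayoff r a i - ∑ k, a k * r {k} i| ≤ 2 * (∑ k, a k) ^ 2 := by
  have hsplit := sum_filter_add_sum_filter_not (nonempties N) (fun S => S.card = 1)
    fun S => stageProb a S * r S i
  rw [sum_nonempties_filter_card_eq_one] at hsplit
  have hsingle : |∑ k, stageProb a {k} * r {k} i - ∑ k, a k * r {k} i| ≤ (∑ k, a k) ^ 2 := by
    rw [← sum_sub_distrib, sq, sum_mul]
    refine (abs_sum_le_sum_abs _ _).trans (sum_le_sum fun k _ => ?_)
    rw [← sub_mul, abs_mul]
    exact (mul_le_mul_of_nonneg_right (abs_stageProb_singleton_sub_le ha k) (abs_nonneg _)).trans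
      (mul_le_of_le_one_right (mul_nonneg (ha k).1 (sum_nonneg fun l _ => (ha l).1)) (hr _ i))
  have hmultiple : |∑ S ∈ nonempties N with S.card ≠ 1, stageProb a S * r S i| ≤
      (∑ k, a k) ^ 2 := by
    refine (abs_sum_le_sum_abs _ _).trans ((sum_le_sum fun S _ => ?_).trans
      (sum_stageProb_card_ne_one_le ha))
    rw [abs_mul, abs_of_nonneg (stageProb_nonneg ha S)]
    exact mul_le_of_le_one_right (stageProb_nonneg ha S) (hr S i)
  rw [stagePayoff, ← hsplit]
  calc _ = |(∑ k, stageProb a {k} * r {k} i - ∑ k, a k * r {k} i) +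
        ∑ S ∈ nonempties N with S.card ≠ 1, stageProb a S * r S i| := by ring_nf
    _ ≤ _ := (abs_add_le _ _).trans (by linarith)

end stage

theorem othersContinue_update_self (y : Fin N → ℝ) (i : Fin N) (c : ℝ) :
    othersContinue (update y i c) i = othersContinue y i :=
  prod_congr rfl fun k hk => by rw [update_of_ne (ne_of_mem_erase hk)]

theorem prod_one_sub_update (y : Fin N → ℝ) (i : Fin N) (c : ℝ) :
    ∏ k, (1 - update y i c k) = (1 - c) * othersContinue y i := by
  rw [← mul_prod_erase univ _ (mem_univ i), update_self, ← othersContinue_update_self y i c]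
  rfl

section player

variable {y : Fin N → ℝ} {i : Fin N}

theorem update_mem_Icc (hy : ∀ k, y k ∈ Set.Icc 0 1) {c : ℝ} (hc : c ∈ Set.Icc 0 1) :
    ∀ k, update y i c k ∈ Set.Icc 0 1 :=
  (forall_update_iff y fun _ x => x ∈ Set.Icc (0 : ℝ) 1).2 ⟨hc, fun k _ => hy k⟩

theorem le_one_sub_othersContinue (hy : ∀ k, y k ∈ Set.Icc 0 1) {j : Fin N} (hji : j ≠ i) :
    y j ≤ 1 - othersContinue y i := by
  rw [othersContinue, ← mul_prod_erase _ _ (mem_erase.2 ⟨hji, mem_univ j⟩)]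
  have h0 : 0 ≤ ∏ k ∈ (univ.erase i).erase j, (1 - y k) :=
    prod_nonneg fun k _ => sub_nonneg.2 (hy k).2
  have h1 : ∏ k ∈ (univ.erase i).erase j, (1 - y k) ≤ 1 :=
    prod_le_one (fun k _ => sub_nonneg.2 (hy k).2) fun k _ => by linarith [(hy k).1]
  nlinarith [(hy j).1, (hy j).2]

theorem abs_quitPayoff_le (hr : ∀ S j, |r S j| ≤ 1) (hdiag : ∀ i, r {i} i = 0)
    (hy : ∀ k, y k ∈ Set.Icc 0 1) : |quitPayoff r y i| ≤ 1 - othersContinue y i := by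
  have h := abs_stagePayoff_le hr (update_mem_Icc (i := i) hy ⟨zero_le_one, le_rfl⟩)
    (S₀ := {i}) (by simp [nonempties]) (hdiag i)
  rwa [prod_one_sub_update, sub_self, zero_mul, sub_zero, stageProb_singleton,
    othersContinue_update_self, update_self, one_mul] at h

theorem abs_waitPayoff_sub_le (hr : ∀ S j, |r S j| ≤ 1) (hdiag : ∀ i, r {i} i = 0)
    (hy : ∀ k, y k ∈ Set.Icc 0 1) :
    |waitPayoff r y i - ∑ k, y k * r {k} i| ≤ 2 * (∑ k ∈ univ.erase i, y k) ^ 2 := by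
  have hfirst : ∑ k, update y i 0 k * r {k} i = ∑ k, y k * r {k} i :=
    sum_congr rfl fun k _ => by
      rcases eq_or_ne k i with rfl | hk
      · simp [hdiag]
      · rw [update_of_ne hk]
  have h := abs_stagePayoff_sub_le hr (update_mem_Icc (i := i) hy ⟨le_rfl, zero_le_one⟩) i
  rwa [hfirst, sum_update_of_mem (mem_univ i), zero_add, sdiff_singleton_eq_erase] at h

end player

def survival (Q : ℝ) (q : ℕ → ℝ) (t : ℕ) : ℝ :=
  ∏ s ∈ range t, ((1 - q s) * Q)

section survival

open Filter Topology

variable {Q : ℝ} {q : ℕ → ℝ}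

theorem survival_succ (Q : ℝ) (q : ℕ → ℝ) (t : ℕ) :
    survival Q q (t + 1) = survival Q q t * ((1 - q t) * Q) :=
  prod_range_succ _ _

variable (hQ0 : 0 ≤ Q) (hQ1 : Q < 1) (hq : ∀ t, q t ∈ Set.Icc 0 1)
include hQ0 hq

theorem survival_nonneg (t : ℕ) : 0 ≤ survival Q q t :=
  prod_nonneg fun s _ => mul_nonneg (sub_nonneg.2 (hq s).2) hQ0

theorem survival_le_pow (t : ℕ) : survival Q q t ≤ Q ^ t := by
  refine (prod_le_prod (fun s _ => mul_nonneg (sub_nonneg.2 (hq s).2) hQ0)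
    fun s _ => mul_le_of_le_one_left hQ0 (by linarith [(hq s).1])).trans_eq ?_
  rw [prod_const, card_range]

include hQ1

theorem tendsto_survival : Tendsto (survival Q q) atTop (𝓝 0) :=
  squeeze_zero (survival_nonneg hQ0 hq) (survival_le_pow hQ0 hq)
    (tendsto_pow_atTop_nhds_zero_of_lt_one hQ0 hQ1)

theorem summable_survival_mul {g : ℕ → ℝ} {M : ℝ} (hg : ∀ t, |g t| ≤ M) :
    Summable fun t => survival Q q t * g t := by
  refine Summable.of_norm_bounded ((summable_geometric_of_lt_one hQ0 hQ1).mul_right M)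
    fun t => ?_
  rw [Real.norm_eq_abs, abs_mul, abs_of_nonneg (survival_nonneg hQ0 hq t)]
  exact mul_le_mul (survival_le_pow hQ0 hq t) (hg t) (abs_nonneg _) (pow_nonneg hQ0 t)

theorem hasSum_survival_mul_stop :
    HasSum (fun t => survival Q q t * (1 - (1 - q t) * Q)) 1 := by
  have hsum : Summable fun t => survival Q q t * (1 - (1 - q t) * Q) :=
    summable_survival_mul hQ0 hQ1 hq (M := 1) fun t => by
      have := (hq t).1
      have := (hq t).2
      rw [abs_le]
      constructor <;> nlinarith
  have hpartial (T : ℕ) :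
      ∑ t ∈ range T, survival Q q t * (1 - (1 - q t) * Q) = 1 - survival Q q T := by
    induction T with
    | zero => simp [survival]
    | succ T ih => rw [sum_range_succ, ih, survival_succ]; ring
  have hlim := (tendsto_survival hQ0 hQ1 hq).const_sub 1
  rw [sub_zero] at hlim
  have htsum := tendsto_nhds_unique hsum.hasSum.tendsto_sum_nat
    (hlim.congr fun T => (hpartial T).symm)
  have h := hsum.hasSum
  rwa [htsum] at h

theorem tsum_survival_mul_le {A C v : ℝ} (hA : A ≤ v) (hC : C + Q * v ≤ v) :
    ∑' t, survival Q q t * (q t * A + (1 - q t) * C) ≤ v := by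
  have hsum : Summable fun t => survival Q q t * (q t * A + (1 - q t) * C) :=
    summable_survival_mul hQ0 hQ1 hq (M := |A| + |C|) fun t => by
      have := (hq t).1
      have := (hq t).2
      calc _ ≤ |q t * A| + |(1 - q t) * C| := abs_add_le _ _
        _ = q t * |A| + (1 - q t) * |C| := by
          rw [abs_mul, abs_mul, abs_of_nonneg (hq t).1, abs_of_nonneg (sub_nonneg.2 (hq t).2)]
        _ ≤ _ := by nlinarith [abs_nonneg A, abs_nonneg C]
  have hpartial (T : ℕ) : ∑ t ∈ range T, survival Q q t * (q t * A + (1 - q t) * C) ≤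
      v - survival Q q T * v := by
    induction T with
    | zero => simp [survival]
    | succ T ih =>
      rw [sum_range_succ, survival_succ]
      have hstage : q T * A + (1 - q T) * C ≤ v - (1 - q T) * Q * v := by
        nlinarith [mul_le_mul_of_nonneg_left hA (hq T).1,
          mul_le_mul_of_nonneg_left hC (sub_nonneg.2 (hq T).2)]
      nlinarith [mul_le_mul_of_nonneg_left hstage (survival_nonneg hQ0 hq T)]
  have hlim := ((tendsto_survival hQ0 hQ1 hq).mul_const v).const_sub v
  rw [zero_mul, sub_zero] at hlim
  exact le_of_tendsto_of_tendsto' hsum.hasSum.tendsto_sum_nat hlim hpartial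

end survival

theorem tsum_survival_const_mul {Q c : ℝ} (hQ0 : 0 ≤ Q) (hQ1 : Q < 1) (hc : c ∈ Set.Icc 0 1)
    (g : ℝ) : ∑' t, survival Q (fun _ => c) t * g = g / (1 - (1 - c) * Q) := by
  have h0 : 0 ≤ (1 - c) * Q := mul_nonneg (sub_nonneg.2 hc.2) hQ0
  have h1 : (1 - c) * Q < 1 := by nlinarith [hc.1]
  simp only [survival, prod_const, card_range]
  rw [tsum_mul_right, tsum_geometric_of_lt_one h0 h1, div_eq_inv_mul]

theorem termProb_update_const (y : Fin N → ℝ) (i : Fin N) (q : ℕ → ℝ) (t : ℕ)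
    (S : Finset (Fin N)) : termProb (update (fun j _ => y j) i q) t S =
      survival (othersContinue y i) q t * stageProb (update y i (q t)) S := by
  have hstage (k : Fin N) (u : ℕ) : update (fun j _ => y j) i q k u = update y i (q u) k := by
    rcases eq_or_ne k i with rfl | hk
    · simp
    · simp [hk]
  simp only [termProb, hstage, survival, stageProb, prod_one_sub_update]

section stationary

variable {y : Fin N → ℝ} {i : Fin N}

theorem payoff_update_const (hy : ∀ k, y k ∈ Set.Icc 0 1) {q : ℕ → ℝ}
    (hq : ∀ t, q t ∈ Set.Icc 0 1) (hQ : othersContinue y i < 1) :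
    payoff r (update (fun j _ => y j) i q) i = ∑' t, survival (othersContinue y i) q t *
      (q t * quitPayoff r y i + (1 - q t) * waitPayoff r y i) := by
  have hpay (t : ℕ) :
      ∑ S ∈ nonempties N, termProb (update (fun j _ => y j) i q) t S * r S i =
        survival (othersContinue y i) q t *
          (q t * quitPayoff r y i + (1 - q t) * waitPayoff r y i) := by
    simp only [termProb_update_const, mul_assoc, ← mul_sum]
    rw [quitPayoff, waitPayoff, ← stagePayoff_update]
    rfl
  have hstop (t : ℕ) : ∑ S ∈ nonempties N, termProb (update (fun j _ => y j) i q) t S =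
      survival (othersContinue y i) q t * (1 - (1 - q t) * othersContinue y i) := by
    simp only [termProb_update_const, ← mul_sum, sum_stageProb_nonempties, prod_one_sub_update]
  simp only [payoff, hpay, hstop,
    (hasSum_survival_mul_stop (othersContinue_nonneg hy i) hQ hq).tsum_eq, sub_self, zero_mul,
    add_zero]

theorem payoff_const (hy : ∀ k, y k ∈ Set.Icc 0 1) (hQ : othersContinue y i < 1) :
    payoff r (fun j _ => y j) i = (y i * quitPayoff r y i + (1 - y i) * waitPayoff r y i) /
      (1 - (1 - y i) * othersContinue y i) := by
  have h := payoff_update_const (r := r) hy (q := fun _ => y i) (fun _ => hy i) hQ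
  rw [update_eq_self] at h
  rw [h, tsum_survival_const_mul (othersContinue_nonneg hy i) hQ (hy i)]

/-- Never quitting is worth `waitPayoff r y i / (1 - othersContinue y i)`, so the hypotheses say
that neither pure deviation gains more than `ε`; every other deviation mixes the two. -/
theorem isEpsEquilibrium_const {ε : ℝ} (hy : ∀ k, y k ∈ Set.Icc 0 1)
    (h : ∀ i, othersContinue y i < 1 ∧ quitPayoff r y i ≤ payoff r (fun j _ => y j) i + ε ∧
      waitPayoff r y i ≤ (1 - othersContinue y i) * (payoff r (fun j _ => y j) i + ε)) :
    IsEpsEquilibrium r (fun j _ => y j) ε := by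
  refine ⟨fun j _ => hy j, fun i x' hx' => ?_⟩
  obtain ⟨hQ, hquit, hwait⟩ := h i
  rw [payoff_update_const hy hx' hQ, ge_iff_le, sub_le_iff_le_add]
  exact tsum_survival_mul_le (othersContinue_nonneg hy i) hQ hx' hquit (by linarith)

end stationary

theorem quit_wait_le_of_bounds {A C Q y σ ℓ m ε : ℝ} (hy : y ∈ Set.Icc 0 1) (hQ : 0 ≤ Q)
    (hm : 0 < m) (hmQ : m ≤ 1 - Q) (hQσ : 1 - Q ≤ σ) (hA : |A| ≤ 1 - Q)
    (hC : |C - ℓ| ≤ 2 * σ ^ 2) (hε : 0 ≤ ε) (hquit : 3 * σ ^ 2 - ℓ ≤ ε * max y m)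
    (hwait : y * (ℓ + 3 * σ ^ 2) ≤ ε * m * max y m) :
    A ≤ (y * A + (1 - y) * C) / (1 - (1 - y) * Q) + ε ∧
      C ≤ (1 - Q) * ((y * A + (1 - y) * C) / (1 - (1 - y) * Q) + ε) := by
  obtain ⟨hy0, hy1⟩ := hy
  obtain ⟨hC1, hC2⟩ := abs_le.1 hC
  have hmax : max y m ≤ 1 - (1 - y) * Q := max_le (by nlinarith) (by nlinarith)
  have hden : 0 < 1 - (1 - y) * Q := hm.trans_le ((le_max_right y m).trans hmax)
  have hdA : |(1 - Q) * A| ≤ σ ^ 2 := by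
    rw [abs_mul, abs_of_nonneg (hm.le.trans hmQ), sq]
    exact mul_le_mul hQσ (hA.trans hQσ) (abs_nonneg A) ((hm.le.trans hmQ).trans hQσ)
  obtain ⟨hdA1, hdA2⟩ := abs_le.1 hdA
  have hεmax := mul_le_mul_of_nonneg_left hmax hε
  -- with `v` the stationary value and `D` its denominator, `D (A - v) = (1 - y)((1 - Q)A - C)`
  -- and `D (C - (1 - Q) v) = y (C - (1 - Q) A)`
  constructor
  · have hkey : (1 - y) * ((1 - Q) * A - C) ≤ ε * (1 - (1 - y) * Q) := by
      rcases le_total ((1 - Q) * A - C) 0 with h | h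
      · nlinarith
      · nlinarith
    rw [← sub_le_iff_le_add, le_div_iff₀ hden]
    nlinarith
  · have hkey : y * (C - (1 - Q) * A) ≤ ε * (1 - Q) * (1 - (1 - y) * Q) := by
      have h1 : y * (C - (1 - Q) * A) ≤ y * (ℓ + 3 * σ ^ 2) :=
        mul_le_mul_of_nonneg_left (by linarith) hy0
      have h2 := mul_le_mul_of_nonneg_right hmQ (mul_nonneg hε (hy0.trans (le_max_left y m)))
      have h3 := mul_le_mul_of_nonneg_left hεmax (hm.le.trans hmQ)
      nlinarith
    rw [mul_add, ← sub_le_iff_le_add, mul_div_assoc', le_div_iff₀ hden]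
    nlinarith

/-- With `σᵢ = ∑_{k ≠ i} y_k` and `ℓᵢ = ∑ₖ y_k r^k_i`, the difference
`(1 - othersContinue y i) * quitPayoff r y i - waitPayoff r y i` lies between `-(ℓᵢ + 3σᵢ²)` and
`3σᵢ² - ℓᵢ`; `m i` bounds from below the probability that somebody other than `i` quits. -/
theorem isEpsEquilibrium_const_of_firstOrder {y : Fin N → ℝ} (hr : ∀ S j, |r S j| ≤ 1)
    (hdiag : ∀ i, r {i} i = 0) (hy : ∀ k, y k ∈ Set.Icc 0 1) {ε : ℝ} (hε : 0 ≤ ε)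
    (m : Fin N → ℝ) (hm : ∀ i, 0 < m i ∧ ∃ j ≠ i, m i ≤ y j)
    (hquit : ∀ i, 3 * (∑ k ∈ univ.erase i, y k) ^ 2 - ∑ k, y k * r {k} i ≤ ε * max (y i) (m i))
    (hwait : ∀ i, y i * (∑ k, y k * r {k} i + 3 * (∑ k ∈ univ.erase i, y k) ^ 2) ≤
      ε * m i * max (y i) (m i)) :
    IsEpsEquilibrium r (fun j _ => y j) ε := by
  refine isEpsEquilibrium_const hy fun i => ?_
  obtain ⟨hm0, j, hji, hmj⟩ := hm i
  have hmQ : m i ≤ 1 - othersContinue y i := hmj.trans (le_one_sub_othersContinue hy hji)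
  have hQ : othersContinue y i < 1 := by linarith
  rw [payoff_const hy hQ]
  exact ⟨hQ, quit_wait_le_of_bounds (hy i) (othersContinue_nonneg hy i) hm0 hmQ
    (one_sub_othersContinue_le_sum hy i) (abs_quitPayoff_le hr hdiag hy)
    (abs_waitPayoff_sub_le hr hdiag hy) hε (hquit i) (hwait i)⟩

theorem isEpsEquilibrium_of_punisher {ε : ℝ} (hr : ∀ S i, |r S i| ≤ 1)
    (hdiag : ∀ i, r {i} i = 0) {j k : Fin N} (hkj : k ≠ j) (hj : ∀ i, 0 ≤ r {j} i)
    (hk : r {k} j ≤ 0) (hε : 0 < ε) (hε1 : ε ≤ 1) :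
    IsEpsEquilibrium r
      (fun i _ => (if i = j then ε / 24 else 0) + if i = k then ε ^ 2 / 48 else 0) ε := by
  set y : Fin N → ℝ := fun i => (if i = j then ε / 24 else 0) + if i = k then ε ^ 2 / 48 else 0
  have hyj : y j = ε / 24 := by simp [y, hkj.symm]
  have hyk : y k = ε ^ 2 / 48 := by simp [y, hkj]
  have hyo {i : Fin N} (hij : i ≠ j) (hik : i ≠ k) : y i = 0 := by simp [y, hij, hik]
  have hy : ∀ i, y i ∈ Set.Icc 0 1 := fun i => by
    rcases eq_or_ne i j with rfl | hij
    · rw [hyj]; constructor <;> linarith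
    rcases eq_or_ne i k with rfl | hik
    · rw [hyk]; constructor <;> nlinarith
    rw [hyo hij hik]; simp
  have hσ (i : Fin N) : ∑ l ∈ univ.erase i, y l = ε / 24 + ε ^ 2 / 48 - y i := by
    rw [sum_erase_eq_sub (mem_univ i)]
    simp [y, sum_add_distrib]
  have hℓ (i : Fin N) : ∑ l, y l * r {l} i = ε / 24 * r {j} i + ε ^ 2 / 48 * r {k} i := by
    simp [y, add_mul, sum_add_distrib]
  have hrb (S : Finset (Fin N)) (i : Fin N) := abs_le.1 (hr S i)
  have hβ : 0 < ε / 24 := by positivity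
  have hη : 0 < ε ^ 2 / 48 := by positivity
  have hβη : ε ^ 2 / 48 ≤ ε / 24 := by nlinarith
  refine isEpsEquilibrium_const_of_firstOrder hr hdiag hy hε.le
    (fun i => if i = j then ε ^ 2 / 48 else ε / 24) (fun i => ?_) (fun i => ?_) (fun i => ?_)
  · rcases eq_or_ne i j with rfl | hij
    · exact ⟨by simp; positivity, k, hkj, by simp [hyk]⟩
    · exact ⟨by simp [hij]; positivity, j, hij.symm, by simp [hij, hyj]⟩
  · rw [hσ, hℓ]
    rcases eq_or_ne i j with rfl | hij
    · rw [hyj, hdiag, if_pos rfl, max_eq_left hβη]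
      nlinarith [mul_le_mul_of_nonneg_left (hrb {k} i).1 hη.le]
    rcases eq_or_ne i k with rfl | hik
    · rw [hyk, hdiag, if_neg hij, max_eq_right hβη]
      nlinarith [mul_nonneg hβ.le (hj i)]
    · rw [hyo hij hik, if_neg hij, max_eq_right hβ.le]
      nlinarith [mul_nonneg hβ.le (hj i), mul_le_mul_of_nonneg_left (hrb {k} i).1 hη.le]
  · rw [hσ, hℓ]
    rcases eq_or_ne i j with rfl | hij
    · rw [hyj, hdiag, if_pos rfl, max_eq_left hβη]
      nlinarith [mul_nonpos_of_nonneg_of_nonpos (mul_nonneg hβ.le hη.le) hk]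
    rcases eq_or_ne i k with rfl | hik
    · rw [hyk, hdiag, if_neg hij, max_eq_right hβη]
      nlinarith [mul_le_mul_of_nonneg_left (hrb {j} i).2 (mul_nonneg hη.le hβ.le)]
    · rw [hyo hij hik, if_neg hij, zero_mul]
      positivity

theorem normalLevel_antitone : Antitone (normalLevel r) :=
  antitone_nat_of_succ_le fun _ _ hi => hi.1

theorem pos_of_notMem_normalPlayers {i j : Fin N} (hi : i ∉ normalPlayers r)
    (hj : j ∈ normalPlayers r) (hji : j ≠ i) : 0 < r {j} i := by
  by_contra! h
  refine hi (Set.mem_iInter.2 fun l => ?_)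
  induction l with
  | zero => trivial
  | succ l ih => exact ⟨ih, j, Set.mem_iInter.1 hj l, hji, h⟩

/-- Pigeonhole: one punisher of `i` at level `l + 1` recurs for infinitely many `l`, hence
survives every level. -/
theorem exists_punisher {i : Fin N} (hi : i ∈ normalPlayers r) :
    ∃ j ∈ normalPlayers r, j ≠ i ∧ r {j} i ≤ 0 := by
  choose f hf using fun l => (Set.mem_iInter.1 hi (l + 1)).2
  obtain ⟨j, hj⟩ := Finite.exists_infinite_fiber f
  have hj' := Set.infinite_coe_iff.1 hj
  obtain ⟨l₀, hl₀⟩ := hj'.nonempty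
  refine ⟨j, Set.mem_iInter.2 fun l => ?_, hl₀ ▸ (hf l₀).2⟩
  obtain ⟨l', hl', hll'⟩ := hj'.exists_gt l
  exact normalLevel_antitone hll'.le (hl' ▸ (hf l').1)

theorem sum_mul_nonneg_of_notMem_normalPlayers {ξ : Fin N → ℝ} (hξ : ∀ k, 0 ≤ ξ k)
    (hsupp : ∀ k, 0 < ξ k → k ∈ normalPlayers r) {i : Fin N} (hi : i ∉ normalPlayers r) :
    0 ≤ ∑ k, ξ k * r {k} i := by
  refine sum_nonneg fun k _ => ?_
  rcases (hξ k).eq_or_lt with hk | hk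
  · rw [← hk, zero_mul]
  · have hkN := hsupp k hk
    exact mul_nonneg hk.le (pos_of_notMem_normalPlayers hi hkN (ne_of_mem_of_not_mem hkN hi)).le

/-- A solution of `LCP((r^k)_k, 0)` with `z_0 = 0`, normalised and indexed by all players. -/
structure IsLCPDistribution (r : Finset (Fin N) → Fin N → ℝ) (ξ : Fin N → ℝ) : Prop where
  nonneg : ∀ k, 0 ≤ ξ k
  sum_eq_one : ∑ k, ξ k = 1
  sum_mul_nonneg : ∀ i, 0 ≤ ∑ k, ξ k * r {k} i
  sum_mul_eq_zero : ∀ i, 0 < ξ i → ∑ k, ξ k * r {k} i = 0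

theorem exists_isLCPDistribution {n : ℕ} {e : Fin n → Fin N} (he : Injective e)
    (hrange : Set.range e = normalPlayers r) {w : Fin n → ℝ} {z : Fin (n + 1) → ℝ}
    (hsol : IsLCPSolution n (fun i j => r {e i} (e j)) 0 w z) (hz : z 0 < 1) :
    ∃ ξ, IsLCPDistribution r ξ ∧ ∀ k, 0 < ξ k → k ∈ normalPlayers r := by
  obtain ⟨hw, hz0, hzsum, hweq, hcomp⟩ := hsol
  have hζ : 0 < 1 - z 0 := sub_pos.2 hz
  set ξ := extend e (fun m => z m.succ / (1 - z 0)) 0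
  have hξe (m : Fin n) : ξ (e m) = z m.succ / (1 - z 0) := he.extend_apply _ _ _
  have hξo {k : Fin N} (hk : k ∉ Set.range e) : ξ k = 0 := extend_apply' _ _ _ hk
  have hsum (g : Fin N → ℝ) : ∑ k, ξ k * g k = (∑ m, z m.succ * g (e m)) / (1 - z 0) := by
    rw [← Fintype.sum_of_injective e he _ _ (fun k hk => by rw [hξo hk, zero_mul])
      fun m => rfl, sum_div]
    exact sum_congr rfl fun m _ => by rw [hξe]; ring
  have hsupp (k : Fin N) (hk : 0 < ξ k) : k ∈ normalPlayers r := by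
    by_contra h
    exact hk.ne' (hξo (hrange ▸ h))
  have hnonneg (k : Fin N) : 0 ≤ ξ k := by
    by_cases hk : k ∈ Set.range e
    · obtain ⟨m, rfl⟩ := hk
      exact hξe m ▸ div_nonneg (hz0 _) hζ.le
    · exact (hξo hk).ge
  have hW (m : Fin n) : ∑ k, ξ k * r {k} (e m) = w m / (1 - z 0) := by
    rw [hsum, hweq m, Pi.zero_apply, mul_zero, zero_add]
  refine ⟨ξ, ⟨hnonneg, ?_, fun i => ?_, fun i hi => ?_⟩, hsupp⟩
  · have h := hsum 1
    simp only [Pi.one_apply, mul_one] at h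
    rw [h, div_eq_one_iff_eq hζ.ne', eq_sub_iff_add_eq', ← hzsum, Fin.sum_univ_succ]
  · by_cases hi : i ∈ Set.range e
    · obtain ⟨m, rfl⟩ := hi
      exact hW m ▸ div_nonneg (hw m) hζ.le
    · exact sum_mul_nonneg_of_notMem_normalPlayers hnonneg hsupp (hrange ▸ hi)
  · obtain ⟨m, rfl⟩ := hrange ▸ hsupp i hi
    rw [hW m]
    rcases hcomp m with h | h
    · rw [hξe, h, zero_div] at hi
      exact absurd hi (lt_irrefl 0)
    · rw [h, zero_div]
namespace IsLCPDistribution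

variable {ε : ℝ} {ξ : Fin N → ℝ} (hξ : IsLCPDistribution r ξ)
include hξ

theorem le_one (k : Fin N) : ξ k ≤ 1 :=
  hξ.sum_eq_one ▸ single_le_sum (fun l _ => hξ.nonneg l) (mem_univ k)

theorem two_quitters_or_pure :
    (∃ j k, j ≠ k ∧ 0 < ξ j ∧ 0 < ξ k) ∨ ∃ j, 0 < ξ j ∧ ∀ i, 0 ≤ r {j} i := by
  obtain ⟨j, hj⟩ : ∃ j, 0 < ξ j := by
    by_contra! h
    have := sum_nonpos fun k (_ : k ∈ univ) => h k
    linarith [hξ.sum_eq_one]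
  by_cases h : ∃ k, k ≠ j ∧ 0 < ξ k
  · obtain ⟨k, hkj, hk⟩ := h
    exact Or.inl ⟨j, k, hkj.symm, hj, hk⟩
  push Not at h
  have hzero (k : Fin N) (hkj : k ≠ j) : ξ k = 0 := (h k hkj).antisymm (hξ.nonneg k)
  have hξj : ξ j = 1 := by
    rw [← hξ.sum_eq_one, sum_eq_single j (fun k _ => hzero k) (by simp)]
  refine Or.inr ⟨j, hj, fun i => ?_⟩
  have hW := hξ.sum_mul_nonneg i
  rwa [sum_eq_single j (fun k _ hkj => by rw [hzero k hkj, zero_mul]) (by simp), hξj,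
    one_mul] at hW

theorem isEpsEquilibrium_smul (hr : ∀ S i, |r S i| ≤ 1) (hdiag : ∀ i, r {i} i = 0)
    {j k : Fin N} (hjk : j ≠ k) (hj : 0 < ξ j) (hk : 0 < ξ k) (hε : 0 < ε) (hε1 : ε ≤ 1) :
    IsEpsEquilibrium r (fun i _ => ε * min (ξ j) (ξ k) / 3 * ξ i) ε := by
  set μ := min (ξ j) (ξ k)
  have hμ : 0 < μ := lt_min hj hk
  have hμ1 : μ ≤ 1 := (min_le_left _ _).trans (hξ.le_one j)
  set δ := ε * μ / 3 with hδ_def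
  have hδ : 0 < δ := by positivity
  have hδ1 : δ ≤ 1 := by rw [hδ_def]; nlinarith
  have hy (i : Fin N) : δ * ξ i ∈ Set.Icc 0 1 :=
    ⟨mul_nonneg hδ.le (hξ.nonneg i), mul_le_one₀ hδ1 (hξ.nonneg i) (hξ.le_one i)⟩
  have hσ (i : Fin N) : ∑ l ∈ univ.erase i, δ * ξ l ∈ Set.Icc 0 δ := by
    refine ⟨sum_nonneg fun l _ => (hy l).1, ?_⟩
    calc _ ≤ ∑ l, δ * ξ l := sum_le_sum_of_subset_of_nonneg (erase_subset i univ)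
            fun l _ _ => (hy l).1
      _ = δ := by rw [← mul_sum, hξ.sum_eq_one, mul_one]
  have hσ2 (i : Fin N) : (∑ l ∈ univ.erase i, δ * ξ l) ^ 2 ≤ δ ^ 2 :=
    pow_le_pow_left₀ (hσ i).1 (hσ i).2 2
  have hℓ (i : Fin N) : ∑ l, δ * ξ l * r {l} i = δ * ∑ l, ξ l * r {l} i := by
    simp only [mul_assoc, mul_sum]
  have hδμ : 3 * δ ^ 2 = ε * (δ * μ) := by ring
  refine isEpsEquilibrium_const_of_firstOrder hr hdiag hy hε.le (fun _ => δ * μ)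
    (fun i => ⟨by positivity, ?_⟩) (fun i => ?_) (fun i => ?_)
  · rcases eq_or_ne i j with rfl | hij
    · exact ⟨k, hjk.symm, mul_le_mul_of_nonneg_left (min_le_right _ _) hδ.le⟩
    · exact ⟨j, hij.symm, mul_le_mul_of_nonneg_left (min_le_left _ _) hδ.le⟩
  · rw [hℓ]
    nlinarith [hσ2 i, mul_nonneg hδ.le (hξ.sum_mul_nonneg i),
      mul_le_mul_of_nonneg_left (le_max_right (δ * ξ i) (δ * μ)) hε.le]
  · rcases (hξ.nonneg i).eq_or_lt with h0 | hpos
    · rw [← h0, mul_zero, zero_mul]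
      positivity
    · rw [hℓ, hξ.sum_mul_eq_zero i hpos, mul_zero, zero_add]
      calc δ * ξ i * (3 * (∑ l ∈ univ.erase i, δ * ξ l) ^ 2)
          ≤ δ * ξ i * (3 * δ ^ 2) :=
            mul_le_mul_of_nonneg_left (by linarith [hσ2 i]) (hy i).1
        _ = ε * (δ * μ) * (δ * ξ i) := by rw [hδμ]; ring
        _ ≤ ε * (δ * μ) * max (δ * ξ i) (δ * μ) := by gcongr; exact le_max_left _ _

end IsLCPDistribution

end QuittingGame

open QuittingGame

theorem quitting_game_stationary_equilibrium_of_nontrivial_LCP_solution_general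
    (N n : ℕ) (hnN : n ≤ N)
    (r : Finset (Fin N) → Fin N → ℝ)
    (hr : ∀ S i, r S i ∈ Set.Icc (-1 : ℝ) 1)
    (hdiag : ∀ i : Fin N, r {i} i = 0)
    (hIstar : normalPlayers r = {i : Fin N | (i : ℕ) < n})
    (hsol : ∃ (w : Fin n → ℝ) (z : Fin (n + 1) → ℝ),
        IsLCPSolution n (fun i j => r {Fin.castLE hnN i} (Fin.castLE hnN j)) 0 w z ∧
          z 0 < 1)
    (ε : ℝ) (hε : 0 < ε) :
    ∃ x : Fin N → ℕ → ℝ, (∀ i t, x i t = x i 0) ∧ IsEpsEquilibrium r x ε := by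
  obtain ⟨w, z, hsol, hz⟩ := hsol
  obtain ⟨ξ, hξ, hnormal⟩ := exists_isLCPDistribution (Fin.castLE_injective hnN)
    (by rw [Fin.range_castLE, hIstar]) hsol hz
  have hr' (S : Finset (Fin N)) (i : Fin N) : |r S i| ≤ 1 := abs_le.2 (hr S i)
  have hε' : 0 < min ε 1 := lt_min hε one_pos
  suffices ∃ y : Fin N → ℝ, IsEpsEquilibrium r (fun i _ => y i) (min ε 1) by
    obtain ⟨y, hy⟩ := this
    exact ⟨fun i _ => y i, fun _ _ => rfl, hy.mono (min_le_left ε 1)⟩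
  rcases hξ.two_quitters_or_pure with ⟨j, k, hjk, hj, hk⟩ | ⟨j, hj, hrj⟩
  · exact ⟨_, hξ.isEpsEquilibrium_smul hr' hdiag hjk hj hk hε' (min_le_right ε 1)⟩
  · obtain ⟨k, -, hkj, hrk⟩ := exists_punisher (hnormal j hj)
    exact ⟨_, isEpsEquilibrium_of_punisher hr' hdiag hkj hrj hrk hε' (min_le_right ε 1)⟩

/-- **If the set of normal players is nonempty (ordered to be `{0,…,n-1}`) and the
problem `LCP(R̂,0)` has a solution with `z_0 < 1`, then the quitting game admits a
stationary `ε`-equilibrium, for every `ε > 0`.** -/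
theorem quitting_game_stationary_equilibrium_of_nontrivial_LCP_solution
    (N n : ℕ) (hN : 1 ≤ N) (hn : 1 ≤ n) (hnN : n ≤ N)
    (r : Finset (Fin N) → Fin N → ℝ)
    (hr : ∀ S i, r S i ∈ Set.Icc (-1 : ℝ) 1)
    (hdiag : ∀ i : Fin N, r {i} i = 0)
    (hIstar : normalPlayers r = {i : Fin N | (i : ℕ) < n})
    (hsol : ∃ (w : Fin n → ℝ) (z : Fin (n + 1) → ℝ),
        IsLCPSolution n (fun i j => r {Fin.castLE hnN i} (Fin.castLE hnN j)) 0 w z ∧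
          z 0 < 1)
    (ε : ℝ) (hε : 0 < ε) :
    ∃ x : Fin N → ℕ → ℝ, (∀ i t, x i t = x i 0) ∧ IsEpsEquilibrium r x ε :=
  quitting_game_stationary_equilibrium_of_nontrivial_LCP_solution_general N n hnN r hr hdiag hIstar
    hsol ε hε

end
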